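/- arXiv:1807.03495 — 3 statements merged into one kernel-verified Lean document; each statement's English description precedes it below -/
import Mathlib

section
/- Let $n \ge 3$ be an integer, let $\varepsilon \ge 1$ be a real number, let $k \ge 1$ be an integer, and let $p \in (0,1)$. Let $X$ be a binomially distributed random variable with $k$ trials and success probability $p$. Then $\Pr\big[X \ge kp + s(\varepsilon, kp)\big] \le n^{-\varepsilon/3}$. -/
open MeasureTheory ProbabilityTheory

/-- The significance threshold `s(ε, μ) = ε · max{√(μ ln n), ln n}` used by the sig-cGA. -/
noncomputable def sigThreshold (n : ℕ) (ε μ : ℝ) : ℝ :=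
  ε * max (Real.sqrt (μ * Real.log n)) (Real.log n)

/-- The probability that a `Bin(k, p)` random variable takes the value `i`. -/
noncomputable def binomialPMF (k : ℕ) (p : ℝ) (i : ℕ) : ℝ :=
  (k.choose i : ℝ) * p ^ i * (1 - p) ^ (k - i)

/-!
With `μ = kp` and `s = s(ε, μ)`, the exponential Markov inequality at `t = log (1 + s/μ)` gives
`Pr[X ≥ μ + s] ≤ exp (s - (μ + s) log (1 + s/μ)) ≤ exp (-s²/(2μ + s))`, the last step by
`log (1 + x) ≥ 2x/(x + 2)`. The threshold is built so that `s ≥ ε√(μ ln n)` and `s ≥ ε ln n`;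
with `ε ≥ 1` these give `s² ≥ εμ ln n` and `s² ≥ εs ln n`, hence `3s² ≥ ε ln n (2μ + s)`,
i.e. the exponent is at least `ε ln n / 3`.
-/

open Real unitInterval

lemma sub_mul_log_one_add_div_le {μ s : ℝ} (hμ : 0 < μ) (hs : 0 ≤ s) :
    s - (μ + s) * log (1 + s / μ) ≤ -(s ^ 2 / (2 * μ + s)) := by
  have hlog : 2 * s / (s + 2 * μ) ≤ log (1 + s / μ) := by
    have := le_log_one_add_of_nonneg (div_nonneg hs hμ.le)
    rwa [show 2 * (s / μ) / (s / μ + 2) = 2 * s / (s + 2 * μ) by field_simp] at this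
  have hden : 0 < s + 2 * μ := by positivity
  calc s - (μ + s) * log (1 + s / μ) ≤ s - (μ + s) * (2 * s / (s + 2 * μ)) := by gcongr
    _ = -(s ^ 2 / (2 * μ + s)) := by field_simp; ring

namespace ProbabilityTheory

variable {n : ℕ} {p : I}

lemma hasLaw_binomial_of_measure_eq {Ω : Type*} [MeasurableSpace Ω] {P : Measure Ω}
    {X : Ω → ℕ} (hX : Measurable X)
    (h : ∀ i, P {ω | X ω = i} = ENNReal.ofReal (binomialPMF n p i)) :
    HasLaw X (binomial n p) P where
  map_eq := Measure.ext_of_singleton fun i => by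
    rw [Measure.map_apply hX (measurableSet_singleton i), binomial_singleton]
    exact h i

lemma mgf_binomial (t : ℝ) :
    mgf (fun i : ℕ => (i : ℝ)) (binomial n p) t = (1 - p + p * exp t) ^ n := by
  rw [mgf, integral_binomial, add_comm, add_pow, ← Nat.range_succ_eq_Iic]
  refine Finset.sum_congr rfl fun i _ => ?_
  rw [smul_eq_mul, mul_comm t, exp_nat_mul, mul_pow]
  ring

lemma binomial_real_ge_le_exp_mul {t : ℝ} (ht : 0 ≤ t) (a : ℝ) :
    (binomial n p).real {i | a ≤ (i : ℝ)} ≤ exp (-t * a) * (1 - p + p * exp t) ^ n := by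
  rw [← mgf_binomial]
  exact measure_ge_le_exp_mul_mgf a ht (integrable_binomial _)

lemma binomial_real_ge_mean_add_le (hμ : 0 < n * (p : ℝ)) {s : ℝ} (hs : 0 ≤ s) :
    (binomial n p).real {i | n * (p : ℝ) + s ≤ i} ≤ exp (-(s ^ 2 / (2 * (n * p) + s))) := by
  set μ : ℝ := n * p
  set t := log (1 + s / μ)
  have hδ : 0 ≤ s / μ := div_nonneg hs hμ.le
  have ht : 0 ≤ t := log_nonneg (by linarith)
  have hbase : 1 - p + p * exp t = 1 + p * (s / μ) := by
    rw [exp_log (by linarith)]; ring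
  have hpow : (1 - p + p * exp t) ^ n ≤ exp s := calc
    _ ≤ exp (p * (s / μ)) ^ n := by
      rw [hbase]; gcongr
      · exact add_nonneg zero_le_one (mul_nonneg p.2.1 hδ)
      · linarith [add_one_le_exp (p * (s / μ))]
    _ = exp s := by rw [← exp_nat_mul, ← mul_assoc, mul_div_cancel₀ s hμ.ne']
  calc _ ≤ exp (-t * (μ + s)) * (1 - p + p * exp t) ^ n := binomial_real_ge_le_exp_mul ht _
    _ ≤ exp (-t * (μ + s)) * exp s := by gcongr
    _ = exp (s - (μ + s) * t) := by rw [← exp_add]; ring_nf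
    _ ≤ _ := exp_le_exp.2 (sub_mul_log_one_add_div_le hμ hs)

end ProbabilityTheory

section sigThreshold

variable {n : ℕ} {ε μ : ℝ}

lemma sigThreshold_nonneg (hε : 0 ≤ ε) : 0 ≤ sigThreshold n ε μ :=
  mul_nonneg hε (le_max_of_le_right (log_natCast_nonneg n))

lemma div_three_le_sigThreshold_sq_div (hε : 1 ≤ ε) (hμ : 0 < μ) :
    ε * log n / 3 ≤ sigThreshold n ε μ ^ 2 / (2 * μ + sigThreshold n ε μ) := by
  set s := sigThreshold n ε μ
  have hs : 0 ≤ s := sigThreshold_nonneg (by linarith)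
  have hs_sqrt : ε * √(μ * log n) ≤ s := mul_le_mul_of_nonneg_left (le_max_left _ _) (by linarith)
  have hs_log : ε * log n ≤ s := mul_le_mul_of_nonneg_left (le_max_right _ _) (by linarith)
  have hs_sq : ε * (μ * log n) ≤ s ^ 2 := calc
    ε * (μ * log n) ≤ ε ^ 2 * (μ * log n) := by gcongr; nlinarith
    _ = (ε * √(μ * log n)) ^ 2 := by rw [mul_pow, sq_sqrt (by positivity)]
    _ ≤ s ^ 2 := by gcongr
  rw [div_le_div_iff₀ (by norm_num) (by positivity)]
  nlinarith [mul_le_mul_of_nonneg_left hs_log hs]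

end sigThreshold

theorem binomial_upper_significance_tail_general
    (n : ℕ) (hn : 3 ≤ n) (ε : ℝ) (hε : 1 ≤ ε) (k : ℕ) (hk : 1 ≤ k)
    (p : ℝ) (hp0 : 0 < p) (hp1 : p < 1)
    (Ω : Type*) [MeasurableSpace Ω] (P : Measure Ω)
    (X : Ω → ℕ) (hmeas : Measurable X)
    (hX : ∀ i : ℕ, P {ω | X ω = i} = ENNReal.ofReal (binomialPMF k p i)) :
    (P {ω | (k : ℝ) * p + sigThreshold n ε ((k : ℝ) * p) ≤ (X ω : ℝ)}).toReal ≤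
      (n : ℝ) ^ (-(ε / 3)) := by
  have hlaw : HasLaw X (binomial k ⟨p, hp0.le, hp1.le⟩) P := hasLaw_binomial_of_measure_eq hmeas hX
  have hμ : 0 < (k : ℝ) * p := mul_pos (Nat.cast_pos.2 hk) hp0
  have hn0 : (0 : ℝ) < n := by exact_mod_cast (by omega : 0 < n)
  set s := sigThreshold n ε (k * p)
  have hexp : ε * log n / 3 ≤ s ^ 2 / (2 * (k * p) + s) := div_three_le_sigThreshold_sq_div hε hμ
  rw [← measureReal_def, hlaw.measureReal_eq (p := fun i : ℕ => (k : ℝ) * p + s ≤ i) .of_discrete]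
  calc _ ≤ exp (-(s ^ 2 / (2 * (k * p) + s))) :=
        binomial_real_ge_mean_add_le hμ (sigThreshold_nonneg (by linarith))
    _ ≤ exp (log n * -(ε / 3)) := exp_le_exp.2 (by linarith)
    _ = (n : ℝ) ^ (-(ε / 3)) := (rpow_def_of_pos hn0 _).symm

/-- For `n ≥ 3`, `ε ≥ 1`, `k ≥ 1` and `p ∈ (0,1)`, a binomially distributed random variable `X`
with `k` trials and success probability `p` satisfies `Pr[X ≥ kp + s(ε, kp)] ≤ n^{-ε/3}`. -/
theorem binomial_upper_significance_tail
    (n : ℕ) (hn : 3 ≤ n) (ε : ℝ) (hε : 1 ≤ ε) (k : ℕ) (hk : 1 ≤ k)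
    (p : ℝ) (hp0 : 0 < p) (hp1 : p < 1)
    (Ω : Type*) [MeasurableSpace Ω] (P : Measure Ω) [IsProbabilityMeasure P]
    (X : Ω → ℕ) (hmeas : Measurable X)
    (hX : ∀ i : ℕ, P {ω | X ω = i} = ENNReal.ofReal (binomialPMF k p i)) :
    (P {ω | (k : ℝ) * p + sigThreshold n ε ((k : ℝ) * p) ≤ (X ω : ℝ)}).toReal ≤
      (n : ℝ) ^ (-(ε / 3)) :=
  binomial_upper_significance_tail_general n hn ε hε k hk p hp0 hp1 Ω P X hmeas hX
end

section
/- Let $n \ge 3$ be an integer, let $\varepsilon > 12$, and let $\tau \in \{1/n, 1/2\}$. Set $c = (4/\tau) e^4 \varepsilon^2$ and let $k$ be an integer with $k \ge 4 c \ln n$. Let $X$ be binomially distributed with $k$ trials and success probability $(1 + e^{-2}/2)\tau$. Then $\Pr\big[X < k\tau + s(\varepsilon, k\tau)\big] \le n^{-\varepsilon^2/3}$. -/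
open MeasureTheory ProbabilityTheory

/-! The number `X` of saved `1`s is binomial with mean `μ = (1 + δ) k τ`, `δ = e⁻² / 2`.
Since `k τ ≥ 16 e⁴ ε² ln n`, the threshold `s(ε, k τ)` is at most `(δ / 2) k τ`, so the
event forces `X` at least `δ k τ / 2` below its mean. The Chernoff lower-tail bound
`exp (-(μ - T)² / (2 μ))`, from the exponential moment and `e^{-t} ≤ 1 - t + t² / 2`,
then gives `exp (-δ² k τ / 12) ≤ n^{-ε²/3}`. -/

open Finset Real

theorem exp_neg_le_one_sub_add_sq_div_two {x : ℝ} (hx : 0 ≤ x) :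
    exp (-x) ≤ 1 - x + x ^ 2 / 2 := by
  have hcubic : 1 + x + x ^ 2 / 2 + x ^ 3 / 6 ≤ exp x := by
    convert sum_le_exp_of_nonneg hx 4 using 1
    simp [sum_range_succ, Nat.factorial]
  rw [exp_neg, inv_le_iff_one_le_mul₀ (exp_pos x)]
  -- `(1 + x + x²/2 + x³/6)(1 - x + x²/2) = 1 + x³/6 + x⁴/12 + x⁵/12`
  nlinarith [mul_le_mul_of_nonneg_right hcubic (by nlinarith : (0 : ℝ) ≤ 1 - x + x ^ 2 / 2),
    pow_nonneg hx 3, pow_nonneg hx 4, pow_nonneg hx 5]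

theorem binomialPMF_nonneg {k : ℕ} {p : ℝ} (hp₀ : 0 ≤ p) (hp₁ : p ≤ 1) (i : ℕ) :
    0 ≤ binomialPMF k p i := by
  have : 0 ≤ 1 - p := by linarith
  unfold binomialPMF
  positivity

theorem sum_binomialPMF_mul_pow (k : ℕ) (p x : ℝ) :
    ∑ i ∈ range (k + 1), binomialPMF k p i * x ^ i = (1 - p + p * x) ^ k := by
  rw [add_comm (1 - p), add_pow]
  refine sum_congr rfl fun i _ => ?_
  unfold binomialPMF
  ring

theorem sum_binomialPMF_lt_le_exp_mul_pow {k : ℕ} {p : ℝ} (hp₀ : 0 ≤ p) (hp₁ : p ≤ 1)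
    {T : ℝ} (hT : T ≤ k) {t : ℝ} (ht : 0 ≤ t) :
    ∑ i ∈ range ⌈T⌉₊, binomialPMF k p i ≤ exp (t * T) * (1 - p + p * exp (-t)) ^ k := by
  have hpmf := binomialPMF_nonneg (k := k) hp₀ hp₁
  calc ∑ i ∈ range ⌈T⌉₊, binomialPMF k p i
      ≤ ∑ i ∈ range ⌈T⌉₊, binomialPMF k p i * exp (t * (T - i)) := by
        refine sum_le_sum fun i hi => le_mul_of_one_le_right (hpmf i) (one_le_exp ?_)
        have : (i : ℝ) < T := Nat.lt_ceil.mp (mem_range.mp hi)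
        nlinarith
    _ ≤ ∑ i ∈ range (k + 1), binomialPMF k p i * exp (t * (T - i)) := by
        refine sum_le_sum_of_subset_of_nonneg (range_subset_range.mpr ?_)
          fun i _ _ => mul_nonneg (hpmf i) (exp_pos _).le
        exact (Nat.ceil_le.mpr hT).trans k.le_succ
    _ = exp (t * T) * (1 - p + p * exp (-t)) ^ k := by
        rw [← sum_binomialPMF_mul_pow, mul_sum]
        refine sum_congr rfl fun i _ => ?_
        rw [← exp_nat_mul, mul_left_comm, ← exp_add]
        ring_nf

theorem sum_binomialPMF_lt_le_exp_neg_sq {k : ℕ} {p : ℝ} (hp₀ : 0 ≤ p) (hp₁ : p ≤ 1)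
    (hkp : 0 < k * p) {T : ℝ} (hT : T ≤ k * p) :
    ∑ i ∈ range ⌈T⌉₊, binomialPMF k p i ≤ exp (-((k * p - T) ^ 2 / (2 * (k * p)))) := by
  set μ := (k : ℝ) * p
  -- `t = (μ - T) / μ` minimises the quadratic exponent `t T + μ (-t + t² / 2)`
  set t := (μ - T) / μ with ht_def
  have ht : 0 ≤ t := div_nonneg (by linarith) hkp.le
  calc ∑ i ∈ range ⌈T⌉₊, binomialPMF k p i
      ≤ exp (t * T) * (1 - p + p * exp (-t)) ^ k :=
        sum_binomialPMF_lt_le_exp_mul_pow hp₀ hp₁ (hT.trans (by nlinarith)) ht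
    _ ≤ exp (t * T) * exp (μ * (exp (-t) - 1)) := by
        rw [show μ * (exp (-t) - 1) = k * (p * (exp (-t) - 1)) by ring, exp_nat_mul]
        gcongr
        linarith [add_one_le_exp (p * (exp (-t) - 1))]
    _ ≤ exp (t * T + μ * (-t + t ^ 2 / 2)) := by
        rw [← exp_add]
        gcongr
        linarith [exp_neg_le_one_sub_add_sq_div_two ht]
    _ = exp (-((μ - T) ^ 2 / (2 * μ))) := by
        rw [ht_def]
        congr 1
        field_simp
        ring

theorem sum_binomialPMF_lt_le_exp_of_mean_eq {k : ℕ} {p : ℝ} (hp₀ : 0 ≤ p) (hp₁ : p ≤ 1)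
    {δ M T : ℝ} (hδ₀ : 0 ≤ δ) (hδ₁ : δ ≤ 1 / 2) (hM : 0 < M)
    (hkp : k * p = (1 + δ) * M) (hT : T ≤ (1 + δ / 2) * M) :
    ∑ i ∈ range ⌈T⌉₊, binomialPMF k p i ≤ exp (-(δ ^ 2 * M / 12)) := by
  have hμ : 0 < (k : ℝ) * p := by rw [hkp]; positivity
  have hgap : δ * M / 2 ≤ k * p - T := by rw [hkp]; linarith
  refine (sum_binomialPMF_lt_le_exp_neg_sq hp₀ hp₁ hμ (by nlinarith)).trans ?_
  refine exp_le_exp.mpr (neg_le_neg ?_)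
  rw [le_div_iff₀ (by positivity)]
  calc δ ^ 2 * M / 12 * (2 * (k * p)) ≤ (δ * M / 2) ^ 2 := by
        rw [hkp]
        nlinarith [mul_le_mul_of_nonneg_left hδ₁ (by positivity : 0 ≤ δ ^ 2 * M * M)]
    _ ≤ (k * p - T) ^ 2 := pow_le_pow_left₀ (by positivity) hgap 2

theorem measure_lt_toReal_eq_sum {Ω : Type*} [MeasurableSpace Ω] (P : Measure Ω)
    {X : Ω → ℕ} (hX : Measurable X) {f : ℕ → ℝ} (hf : ∀ i, 0 ≤ f i)
    (hXf : ∀ i, P {ω | X ω = i} = ENNReal.ofReal (f i)) (T : ℝ) :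
    (P {ω | (X ω : ℝ) < T}).toReal = ∑ i ∈ range ⌈T⌉₊, f i := by
  have hset : {ω | (X ω : ℝ) < T} = ⋃ i ∈ range ⌈T⌉₊, {ω | X ω = i} := by
    ext ω
    simp [Nat.lt_ceil]
  rw [hset, measure_biUnion_finset, ENNReal.toReal_sum]
  · exact sum_congr rfl fun i _ => by rw [hXf, ENNReal.toReal_ofReal (hf i)]
  · exact fun i _ => by simp [hXf]
  · exact fun i _ j _ hij => Set.disjoint_left.mpr fun ω hi hj => hij (hi.symm.trans hj)
  · exact fun i _ => hX (measurableSet_singleton i)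

theorem sigThreshold_le {n : ℕ} {ε μ a : ℝ} (hε : 0 ≤ ε) (ha : 1 ≤ a)
    (hμ : a ^ 2 * Real.log n ≤ μ) :
    sigThreshold n ε μ ≤ ε * μ / a := by
  have hμ₀ : 0 ≤ μ := (by positivity : 0 ≤ a ^ 2 * Real.log n).trans hμ
  have hsqrt : √(μ * Real.log n) ≤ μ / a := by
    rw [sqrt_le_left (by positivity), div_pow, le_div_iff₀ (by positivity)]
    nlinarith
  have hlog_le : Real.log n ≤ μ / a := by
    rw [le_div_iff₀ (by positivity)]
    nlinarith
  rw [sigThreshold, mul_div_assoc]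
  gcongr
  exact max_le hsqrt hlog_le

theorem sigThreshold_le_exp_neg_two_mul {n : ℕ} {ε M : ℝ} (hε : 1 ≤ ε)
    (hM : 16 * exp 4 * ε ^ 2 * Real.log n ≤ M) :
    sigThreshold n ε M ≤ exp (-2) * M / 4 := by
  have hexp4 : exp 4 = exp 2 ^ 2 := by rw [← exp_nat_mul]; norm_num
  have ha : 1 ≤ 4 * exp 2 * ε := by nlinarith [add_one_le_exp 2]
  calc sigThreshold n ε M ≤ ε * M / (4 * exp 2 * ε) :=
        sigThreshold_le (by linarith) ha (by rw [hexp4] at hM; linarith)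
    _ = exp (-2) * M / 4 := by rw [exp_neg]; field_simp

theorem binomial_lower_tail_leadingones_general
    (n : ℕ) (hn : 3 ≤ n) (ε : ℝ) (hε : 12 < ε)
    (τ : ℝ) (hτ : τ = 1 / (n : ℝ) ∨ τ = 1 / 2)
    (c : ℝ) (hc : c = (4 / τ) * Real.exp 4 * ε ^ 2)
    (k : ℕ) (hk : 4 * c * Real.log n ≤ (k : ℝ))
    (Ω : Type*) [MeasurableSpace Ω] (P : Measure Ω)
    (X : Ω → ℕ) (hmeas : Measurable X)
    (hX : ∀ i : ℕ,
      P {ω | X ω = i} = ENNReal.ofReal (binomialPMF k ((1 + Real.exp (-2) / 2) * τ) i)) :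
    (P {ω | (X ω : ℝ) < (k : ℝ) * τ + sigThreshold n ε ((k : ℝ) * τ)}).toReal ≤
      (n : ℝ) ^ (-(ε ^ 2 / 3)) := by
  have hn₃ : (3 : ℝ) ≤ n := by exact_mod_cast hn
  have hlog : 0 < Real.log n := Real.log_pos (by linarith)
  have hτ₀ : 0 < τ := by rcases hτ with rfl | rfl <;> positivity
  have hτ₁ : τ ≤ 1 / 2 := by
    rcases hτ with rfl | rfl
    · exact one_div_le_one_div_of_le two_pos (by linarith)
    · exact le_rfl
  have hM : 16 * exp 4 * ε ^ 2 * Real.log n ≤ k * τ := by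
    have h4 : 4 * c * τ = 16 * exp 4 * ε ^ 2 := by rw [hc]; field_simp; ring
    nlinarith [mul_le_mul_of_nonneg_right hk hτ₀.le]
  have hs := sigThreshold_le_exp_neg_two_mul (by linarith) hM
  have hexp : exp 4 * exp (-2) ^ 2 = 1 := by rw [← exp_nat_mul, ← exp_add]; norm_num
  have hd₁ : exp (-2) ≤ 1 := exp_le_one_iff.mpr (by norm_num)
  have hp₀ : 0 ≤ (1 + exp (-2) / 2) * τ := by positivity
  have hp₁ : (1 + exp (-2) / 2) * τ ≤ 1 := by nlinarith [exp_pos (-2)]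
  rw [measure_lt_toReal_eq_sum P hmeas (binomialPMF_nonneg hp₀ hp₁) hX]
  calc _ ≤ exp (-((exp (-2) / 2) ^ 2 * (k * τ) / 12)) :=
      sum_binomialPMF_lt_le_exp_of_mean_eq hp₀ hp₁ (by positivity) (by linarith)
        (lt_of_lt_of_le (mul_pos (by positivity) hlog) hM) (by ring) (by linarith)
    _ ≤ exp (-(ε ^ 2 / 3 * Real.log n)) := by
      gcongr
      linear_combination mul_le_mul_of_nonneg_right hM (sq_nonneg (exp (-2))) / 48 -
        ε ^ 2 * Real.log n / 3 * hexp
    _ = (n : ℝ) ^ (-(ε ^ 2 / 3)) := by rw [rpow_def_of_pos (by linarith)]; ring_nf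

/-- Key estimate for the sig-cGA on LeadingOnes: for `n ≥ 3`, `ε > 12`, `τ ∈ {1/n, 1/2}`,
`c = (4/τ)e⁴ε²` and `k ≥ 4c ln n`, a `Bin(k, (1 + e⁻²/2)τ)` random variable `X` satisfies
`Pr[X < kτ + s(ε, kτ)] ≤ n^{-ε²/3}`. -/
theorem binomial_lower_tail_leadingones
    (n : ℕ) (hn : 3 ≤ n) (ε : ℝ) (hε : 12 < ε)
    (τ : ℝ) (hτ : τ = 1 / (n : ℝ) ∨ τ = 1 / 2)
    (c : ℝ) (hc : c = (4 / τ) * Real.exp 4 * ε ^ 2)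
    (k : ℕ) (hk : 4 * c * Real.log n ≤ (k : ℝ))
    (Ω : Type*) [MeasurableSpace Ω] (P : Measure Ω) [IsProbabilityMeasure P]
    (X : Ω → ℕ) (hmeas : Measurable X)
    (hX : ∀ i : ℕ,
      P {ω | X ω = i} = ENNReal.ofReal (binomialPMF k ((1 + Real.exp (-2) / 2) * τ) i)) :
    (P {ω | (X ω : ℝ) < (k : ℝ) * τ + sigThreshold n ε ((k : ℝ) * τ)}).toReal ≤
      (n : ℝ) ^ (-(ε ^ 2 / 3)) :=
  binomial_lower_tail_leadingones_general n hn ε hε τ hτ c hc k hk Ω P X hmeas hX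
end

section
/- Let $S$ be the sum of $n$ independent $\{0,1\}$-valued random variables (Poisson trials) with success probabilities $\tau_1, \ldots, \tau_n$ satisfying $1/6 \le \tau_i \le 5/6$ for all $i$. Then there is a constant $C > 0$, independent of $n$ and of the $\tau_i$, such that for every $s \in \{0, 1, \ldots, n\}$ it holds that $\Pr[S = s] \le C/\sqrt{n}$. -/
/-!
Fourier inversion on `ZMod N` with `N = n + 1 > S` gives
`N · P[S = s] = ∑ₖ e(-ks) ∏ᵢ (1 - τᵢ + τᵢ e(k))`, where `e` is the standard additive character.
If `j` is the least absolute residue of `k`, each factor has modulus at most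
`exp (-8 τᵢ (1 - τᵢ) (j / N)²)`, so the sum is dominated by the theta series
`∑ⱼ exp (-π a j²)` with `a = 8σ² / (π N²)`, `σ² = ∑ᵢ τᵢ (1 - τᵢ)`. Poisson summation bounds that
series by `θ / √a` with `θ = ∑ⱼ exp (-π j²)`, whence `P[S = s] ≤ θ √π / √(8σ²)`, and `σ² ≥ 5n/36`.
-/

open MeasureTheory ProbabilityTheory Real

lemma summable_exp_neg_pi_mul_int_sq {a : ℝ} (ha : 0 < a) :
    Summable fun n : ℤ ↦ exp (-π * a * n ^ 2) := by
  simpa [mul_assoc] using summable_pow_mul_jacobiTheta₂_term_bound 0 ha 0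

lemma tsum_exp_neg_pi_mul_int_sq_le {a : ℝ} (ha₀ : 0 < a) (ha₁ : a ≤ 1) :
    ∑' n : ℤ, exp (-π * a * n ^ 2) ≤ (∑' n : ℤ, exp (-π * n ^ 2)) / √a := by
  rw [tsum_exp_neg_mul_int_sq ha₀, ← sqrt_eq_rpow, one_div_mul_eq_div]
  gcongr ?_ / _
  refine Summable.tsum_le_tsum (fun n ↦ ?_) ?_ ?_
  · gcongr
    rw [neg_div, neg_le_neg_iff]
    exact le_div_self pi_pos.le ha₀ ha₁
  · simpa [div_eq_mul_inv] using summable_exp_neg_pi_mul_int_sq (inv_pos.2 ha₀)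
  · simpa using summable_exp_neg_pi_mul_int_sq one_pos

lemma ZMod.sum_exp_neg_pi_mul_valMinAbs_sq_le {N : ℕ} [NeZero N] {a : ℝ} (ha₀ : 0 < a)
    (ha₁ : a ≤ 1) :
    ∑ k : ZMod N, exp (-π * a * k.valMinAbs ^ 2) ≤ (∑' n : ℤ, exp (-π * n ^ 2)) / √a := by
  refine le_trans ?_ (tsum_exp_neg_pi_mul_int_sq_le ha₀ ha₁)
  rw [← tsum_fintype (L := .unconditional _)]
  exact Summable.tsum_le_tsum_of_inj _ ZMod.injective_valMinAbs (fun _ _ ↦ (exp_pos _).le)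
    (fun _ ↦ le_rfl) .of_finite (summable_exp_neg_pi_mul_int_sq ha₀)

lemma norm_one_sub_add_mul_exp_le (τ θ : ℝ) :
    ‖1 - (τ : ℂ) + τ * Complex.exp (θ * Complex.I)‖ ≤ exp (-(τ * (1 - τ) * (1 - cos θ))) := by
  have hsq : ‖1 - (τ : ℂ) + τ * Complex.exp (θ * Complex.I)‖ ^ 2
      = 1 - 2 * (τ * (1 - τ) * (1 - cos θ)) := by
    rw [Complex.sq_norm, Complex.normSq_apply]
    simp only [Complex.add_re, Complex.sub_re, Complex.mul_re, Complex.add_im, Complex.sub_im,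
      Complex.mul_im, Complex.exp_ofReal_mul_I_re, Complex.exp_ofReal_mul_I_im, Complex.ofReal_re,
      Complex.ofReal_im, Complex.one_re, Complex.one_im]
    linear_combination τ ^ 2 * sin_sq_add_cos_sq θ
  rw [← pow_le_pow_iff_left₀ (norm_nonneg _) (exp_nonneg _) two_ne_zero, hsq, ← exp_nat_mul,
    Nat.cast_ofNat]
  linarith [add_one_le_exp (2 * -(τ * (1 - τ) * (1 - cos θ)))]

lemma ZMod.stdAddChar_eq_exp_valMinAbs {N : ℕ} [NeZero N] (k : ZMod N) :
    ZMod.stdAddChar k = Complex.exp (↑(2 * π * k.valMinAbs / N) * Complex.I) := by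
  conv_lhs => rw [← ZMod.coe_valMinAbs k]
  rw [ZMod.stdAddChar_coe]
  push_cast
  ring_nf

lemma ZMod.norm_one_sub_add_mul_stdAddChar_le {N : ℕ} [NeZero N] {τ : ℝ} (h₀ : 0 ≤ τ)
    (h₁ : τ ≤ 1) (k : ZMod N) :
    ‖1 - (τ : ℂ) + τ * ZMod.stdAddChar k‖ ≤ exp (-(8 * τ * (1 - τ) * (k.valMinAbs / N) ^ 2)) := by
  have hN : (0 : ℝ) < N := by exact_mod_cast Nat.pos_of_neZero N
  have hk : |(k.valMinAbs : ℝ)| * 2 ≤ N := by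
    obtain ⟨hlo, hhi⟩ := ZMod.valMinAbs_mem_Ioc k
    have : |k.valMinAbs * 2| ≤ (N : ℤ) := abs_le.2 ⟨hlo.le, hhi⟩
    rw [abs_mul] at this
    exact_mod_cast this
  have hθ : |2 * π * k.valMinAbs / N| ≤ π := by
    rw [abs_div, abs_mul, abs_of_pos (by positivity : 0 < 2 * π), abs_of_pos hN, div_le_iff₀ hN]
    nlinarith [pi_pos]
  rw [ZMod.stdAddChar_eq_exp_valMinAbs]
  refine (norm_one_sub_add_mul_exp_le τ _).trans (exp_le_exp.2 (neg_le_neg ?_))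
  calc 8 * τ * (1 - τ) * (k.valMinAbs / N : ℝ) ^ 2
      = τ * (1 - τ) * (2 / π ^ 2 * (2 * π * k.valMinAbs / N) ^ 2) := by
        field_simp
        ring
    _ ≤ τ * (1 - τ) * (1 - cos (2 * π * k.valMinAbs / N)) :=
        mul_le_mul_of_nonneg_left (by linarith [cos_le_one_sub_mul_cos_sq hθ])
          (mul_nonneg h₀ (sub_nonneg.2 h₁))

lemma sum_mul_one_sub_le_card_div_four {ι : Type*} [Fintype ι] (p : ι → ℝ) :
    ∑ i, p i * (1 - p i) ≤ Fintype.card ι / 4 := by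
  calc ∑ i, p i * (1 - p i) ≤ ∑ _i : ι, (1 / 4 : ℝ) :=
        Finset.sum_le_sum fun i _ ↦ by nlinarith [sq_nonneg (p i - 1 / 2)]
    _ = Fintype.card ι / 4 := by
        rw [Finset.sum_const, Finset.card_univ, nsmul_eq_mul]
        ring

lemma ZMod.sum_prod_norm_one_sub_add_mul_stdAddChar_le {ι : Type*} [Fintype ι] {N : ℕ}
    [NeZero N] (hN : Fintype.card ι ≤ N) {p : ι → ℝ} (hp : ∀ i, p i ∈ Set.Icc (0 : ℝ) 1)
    (hσ : 0 < ∑ i, p i * (1 - p i)) :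
    ∑ k : ZMod N, ∏ i, ‖1 - (p i : ℂ) + p i * ZMod.stdAddChar k‖
      ≤ N * ((∑' n : ℤ, exp (-π * n ^ 2)) * √π / √(8 * ∑ i, p i * (1 - p i))) := by
  set σ2 := ∑ i, p i * (1 - p i)
  have hN0 : (0 : ℝ) < N := by exact_mod_cast Nat.pos_of_neZero N
  set a := 8 * σ2 / (π * N ^ 2)
  have ha₀ : 0 < a := by positivity
  have ha₁ : a ≤ 1 := by
    have hσN : σ2 ≤ N / 4 := (sum_mul_one_sub_le_card_div_four p).trans (by gcongr)
    have hN1 : (1 : ℝ) ≤ N := by exact_mod_cast Nat.one_le_iff_ne_zero.2 (NeZero.ne N)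
    rw [div_le_one (by positivity)]
    nlinarith [pi_gt_three]
  have hk : ∀ k : ZMod N, ∏ i, ‖1 - (p i : ℂ) + p i * ZMod.stdAddChar k‖
      ≤ exp (-π * a * k.valMinAbs ^ 2) := by
    intro k
    calc ∏ i, ‖1 - (p i : ℂ) + p i * ZMod.stdAddChar k‖
        ≤ ∏ i, exp (-(8 * p i * (1 - p i) * (k.valMinAbs / N) ^ 2)) :=
          Finset.prod_le_prod (fun _ _ ↦ norm_nonneg _) fun i _ ↦
            ZMod.norm_one_sub_add_mul_stdAddChar_le (hp i).1 (hp i).2 k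
      _ = exp (-π * a * k.valMinAbs ^ 2) := by
          rw [← exp_sum]
          congr 1
          simp only [a, σ2, Finset.sum_neg_distrib, ← Finset.sum_mul, Finset.mul_sum]
          field_simp
  calc ∑ k : ZMod N, ∏ i, ‖1 - (p i : ℂ) + p i * ZMod.stdAddChar k‖
      ≤ ∑ k : ZMod N, exp (-π * a * k.valMinAbs ^ 2) := Finset.sum_le_sum fun k _ ↦ hk k
    _ ≤ (∑' n : ℤ, exp (-π * n ^ 2)) / √a := ZMod.sum_exp_neg_pi_mul_valMinAbs_sq_le ha₀ ha₁
    _ = N * ((∑' n : ℤ, exp (-π * n ^ 2)) * √π / √(8 * σ2)) := by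
        rw [sqrt_div' _ (by positivity), sqrt_mul' π (by positivity : (0 : ℝ) ≤ N ^ 2),
          sqrt_sq hN0.le]
        field_simp

section Probability

variable {Ω : Type*} [MeasurableSpace Ω] {P : Measure Ω}

lemma integral_pow_of_le_one [IsProbabilityMeasure P] {X : Ω → ℕ} (hX : Measurable X)
    (hX₁ : ∀ ω, X ω ≤ 1) (z : ℂ) :
    ∫ ω, z ^ X ω ∂P = 1 - P.real {ω | X ω = 1} + P.real {ω | X ω = 1} * z := by
  have hA : MeasurableSet {ω | X ω = 1} := hX (measurableSet_singleton 1)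
  have hsplit : (fun ω ↦ z ^ X ω) = fun ω ↦
      {ω | X ω = 1}.indicator (fun _ ↦ z) ω + {ω | X ω = 1}ᶜ.indicator (fun _ ↦ 1) ω := by
    ext ω
    rcases Nat.le_one_iff_eq_zero_or_eq_one.1 (hX₁ ω) with h | h <;> simp [h]
  rw [hsplit, integral_add ((integrable_const z).indicator hA)
      ((integrable_const 1).indicator hA.compl),
    integral_indicator_const _ hA, integral_indicator_const _ hA.compl,
    probReal_compl_eq_one_sub hA]
  simp only [Complex.real_smul, Complex.ofReal_sub, Complex.ofReal_one, mul_one]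
  ring

lemma ProbabilityTheory.iIndepFun.integral_pow_sum {ι : Type*} [Fintype ι] {X : ι → Ω → ℕ}
    (hX : iIndepFun X P) (hXm : ∀ i, Measurable (X i)) (z : ℂ) :
    ∫ ω, z ^ (∑ i, X i ω) ∂P = ∏ i, ∫ ω, z ^ X i ω ∂P := by
  simp_rw [← Finset.prod_pow_eq_pow_sum]
  exact hX.integral_fun_prod_comp (fun i ↦ (hXm i).aemeasurable)
    (fun _ ↦ measurable_from_nat.aestronglyMeasurable)

lemma natCast_mul_measureReal_eq_sum_stdAddChar [IsFiniteMeasure P] {N : ℕ} [NeZero N]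
    {S : Ω → ℕ} (hS : Measurable S) (hSN : ∀ ω, S ω < N) {s : ℕ} (hs : s < N) :
    (N : ℂ) * P.real {ω | S ω = s}
      = ∑ k : ZMod N, ZMod.stdAddChar (-(k * (s : ZMod N))) * ∫ ω, ZMod.stdAddChar k ^ S ω ∂P := by
  have hA : MeasurableSet {ω | S ω = s} := hS (measurableSet_singleton s)
  have hpoint : ∀ ω, ∑ k : ZMod N, ZMod.stdAddChar (-(k * (s : ZMod N))) * ZMod.stdAddChar k ^ S ω
      = {ω | S ω = s}.indicator (fun _ ↦ (N : ℂ)) ω := by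
    intro ω
    have hcast : ((S ω : ZMod N) - s = 0) ↔ S ω = s := by
      rw [sub_eq_zero, ZMod.natCast_eq_natCast_iff', Nat.mod_eq_of_lt (hSN ω),
        Nat.mod_eq_of_lt hs]
    calc ∑ k : ZMod N, ZMod.stdAddChar (-(k * (s : ZMod N))) * ZMod.stdAddChar k ^ S ω
        = ∑ k : ZMod N, ZMod.stdAddChar (k * ((S ω : ZMod N) - (s : ZMod N))) := by
          refine Finset.sum_congr rfl fun k _ ↦ ?_
          rw [← AddChar.map_nsmul_eq_pow, ← AddChar.map_add_eq_mul, nsmul_eq_mul]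
          ring_nf
      _ = _ := by
          rw [AddChar.sum_mulShift _ (ZMod.isPrimitive_stdAddChar N), ZMod.card]
          by_cases h : S ω = s <;> simp [h, hcast]
  have hint : ∀ k : ZMod N, Integrable (fun ω ↦ ZMod.stdAddChar k ^ S ω) P := fun k ↦
    .of_bound (measurable_from_nat.comp hS).aestronglyMeasurable 1
      (.of_forall fun ω ↦ by simp [ZMod.stdAddChar_apply, Circle.norm_coe])
  simp_rw [← integral_const_mul]
  rw [← integral_finsetSum _ fun k _ ↦ (hint k).const_mul _]
  simp_rw [hpoint]
  rw [integral_indicator_const _ hA, Complex.real_smul, mul_comm]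

lemma ProbabilityTheory.iIndepFun.natCast_mul_measureReal_sum_eq_le [IsProbabilityMeasure P]
    {ι : Type*} [Fintype ι] {X : ι → Ω → ℕ} (hX : iIndepFun X P) (hXm : ∀ i, Measurable (X i))
    (hX₁ : ∀ i ω, X i ω ≤ 1) {N : ℕ} [NeZero N] (hN : Fintype.card ι < N) {s : ℕ} (hs : s < N) :
    N * P.real {ω | ∑ i, X i ω = s} ≤ ∑ k : ZMod N,
      ∏ i, ‖1 - (P.real {ω | X i ω = 1} : ℂ) + P.real {ω | X i ω = 1} * ZMod.stdAddChar k‖ := by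
  have hSN : ∀ ω, ∑ i, X i ω < N := fun ω ↦
    calc ∑ i, X i ω ≤ ∑ _i : ι, 1 := Finset.sum_le_sum fun i _ ↦ hX₁ i ω
      _ < N := by simpa using hN
  have hfourier := natCast_mul_measureReal_eq_sum_stdAddChar (P := P)
    (Finset.measurable_sum _ fun i _ ↦ hXm i) hSN hs
  simp_rw [hX.integral_pow_sum hXm, integral_pow_of_le_one (hXm _) (hX₁ _)] at hfourier
  calc (N : ℝ) * P.real {ω | ∑ i, X i ω = s} = ‖(N : ℂ) * P.real {ω | ∑ i, X i ω = s}‖ := by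
        rw [norm_mul, Complex.norm_natCast, Complex.norm_real, norm_of_nonneg measureReal_nonneg]
    _ ≤ _ := by
        rw [hfourier]
        refine (norm_sum_le _ _).trans (Finset.sum_le_sum fun k _ ↦ ?_)
        rw [norm_mul, ZMod.stdAddChar_apply, Circle.norm_coe, one_mul, norm_prod]

theorem ProbabilityTheory.iIndepFun.measureReal_sum_eq_le [IsProbabilityMeasure P] {ι : Type*}
    [Fintype ι] {X : ι → Ω → ℕ} (hX : iIndepFun X P) (hXm : ∀ i, Measurable (X i))
    (hX₁ : ∀ i ω, X i ω ≤ 1)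
    (hσ : 0 < ∑ i, P.real {ω | X i ω = 1} * (1 - P.real {ω | X i ω = 1}))
    {s : ℕ} (hs : s ≤ Fintype.card ι) :
    P.real {ω | ∑ i, X i ω = s} ≤ (∑' n : ℤ, exp (-π * n ^ 2)) * √π
      / √(8 * ∑ i, P.real {ω | X i ω = 1} * (1 - P.real {ω | X i ω = 1})) := by
  refine le_of_mul_le_mul_left ?_ (Nat.cast_pos.2 (Fintype.card ι).succ_pos)
  exact (hX.natCast_mul_measureReal_sum_eq_le hXm hX₁ (lt_add_one _) (Nat.lt_succ_of_le hs)).trans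
    (ZMod.sum_prod_norm_one_sub_add_mul_stdAddChar_le (Nat.le_succ _)
      (fun _ ↦ ⟨measureReal_nonneg, measureReal_le_one⟩) hσ)

end Probability

/-- Point-probability bound for sums of independent Poisson trials (Sudholt–Witt): there is a
constant `C > 0`, independent of `n` and of the success probabilities `τ i ∈ [1/6, 5/6]`, such
that for every `s ∈ {0, …, n}` the sum `S` of the `n` independent trials satisfies
`Pr[S = s] ≤ C/√n`. -/
theorem poisson_trials_point_probability :
    ∃ C : ℝ, 0 < C ∧
      ∀ (n : ℕ), 0 < n → ∀ (τ : Fin n → ℝ), (∀ i, 1 / 6 ≤ τ i ∧ τ i ≤ 5 / 6) →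
      ∀ (Ω : Type) (_ : MeasurableSpace Ω) (P : Measure Ω), IsProbabilityMeasure P →
      ∀ (X : Fin n → Ω → ℕ), (∀ i, Measurable (X i)) →
      (∀ i ω, X i ω ≤ 1) →
      (∀ i, P {ω | X i ω = 1} = ENNReal.ofReal (τ i)) →
      iIndepFun X P →
      ∀ s : ℕ, s ≤ n →
      (P {ω | ∑ i, X i ω = s}).toReal ≤ C / Real.sqrt n := by
  have hsum : Summable fun n : ℤ ↦ exp (-π * n ^ 2) := by
    simpa using summable_exp_neg_pi_mul_int_sq one_pos
  have hθ : 0 < ∑' n : ℤ, exp (-π * n ^ 2) :=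
    hsum.tsum_pos (fun _ ↦ (exp_pos _).le) 0 (exp_pos _)
  refine ⟨(∑' n : ℤ, exp (-π * n ^ 2)) * √π, by positivity, ?_⟩
  intro n hn τ hτ Ω _ P _ X hXm hX₁ hXτ hX s hs
  have hp : ∀ i, P.real {ω | X i ω = 1} = τ i := fun i ↦ by
    rw [measureReal_def, hXτ, ENNReal.toReal_ofReal (by linarith [(hτ i).1])]
  have hσ : (n : ℝ) ≤ 8 * ∑ i, τ i * (1 - τ i) := by
    calc (n : ℝ) ≤ 8 * ∑ _i : Fin n, (5 / 36 : ℝ) := by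
          rw [Finset.sum_const, Finset.card_univ, Fintype.card_fin, nsmul_eq_mul]
          linarith
      _ ≤ 8 * ∑ i, τ i * (1 - τ i) := by
          gcongr with i
          nlinarith [hτ i]
  have hn' : (0 : ℝ) < n := Nat.cast_pos.2 hn
  rw [← measureReal_def]
  calc P.real {ω | ∑ i, X i ω = s}
      ≤ (∑' n : ℤ, exp (-π * n ^ 2)) * √π / √(8 * ∑ i, τ i * (1 - τ i)) := by
        simpa only [hp] using hX.measureReal_sum_eq_le hXm hX₁
          (by simp only [hp]; linarith) (by simpa using hs)
    _ ≤ (∑' n : ℤ, exp (-π * n ^ 2)) * √π / √n := by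
        gcongr
end
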